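/- Perfect secrecy covertext entropy lower bound: Under the same setup (M uniform on {0,1}^ν, K independent of M, deterministic Dec with Dec(K,C)=M, and C distributed identically to the innocent channel distribution independent of M), the channel (covertext) distribution C has min-entropy at least ν. Consequently, if each channel symbol has min-entropy at most δ, the stegotext must consist of at least ν/δ symbols. -/
import Mathlib


open Finset

lemma sum_le_of_pos_subset {Ω : Type*} [Fintype Ω] (μ : Ω → ℝ)
    (hμ0 : ∀ ω, 0 ≤ μ ω) (A B : Finset Ω)
    (h : ∀ ω ∈ A, 0 < μ ω → ω ∈ B) :
    ∑ ω ∈ A, μ ω ≤ ∑ ω ∈ B, μ ω := by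
  have h1 : ∑ ω ∈ A, μ ω = ∑ ω ∈ A.filter (fun ω => 0 < μ ω), μ ω := by
    rw [Finset.sum_filter_of_ne]
    intro ω _ hne
    exact lt_of_le_of_ne (hμ0 ω) (Ne.symm hne)
  rw [h1]
  apply Finset.sum_le_sum_of_subset_of_nonneg
  · intro ω hω
    simp only [Finset.mem_filter] at hω
    exact h ω hω.1 hω.2
  · intro ω _ _; exact hμ0 ω

/-- Perfect secrecy covertext entropy lower bound.  Under the same setup
(`M` uniform on `{0,1}^ν`, key `K` independent of `M`, covertext `C`
independent of `M`, deterministic always-correct decoding `Dec(K,C) = M`),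
the covertext distribution `C` has min-entropy at least `ν`
(every covertext value has probability at most `2^{−ν}`).  Consequently, if
the covertext is a `t`-symbol sequence whose min-entropy is at most `δ·t`
(i.e. some covertext has probability at least `2^{−δ·t}`), then `t ≥ ν/δ`. -/
theorem perfect_secrecy_covertext_min_entropy
    {Ω Key Ct : Type*} [Fintype Ω] [Fintype Key] [Fintype Ct]
    [DecidableEq Key] [DecidableEq Ct] (ν : ℕ)
    (μ : Ω → ℝ) (hμ0 : ∀ ω, 0 ≤ μ ω) (hμ1 : ∑ ω, μ ω = 1)
    (M : Ω → (Fin ν → Bool)) (K : Ω → Key) (C : Ω → Ct)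
    (Dec : Key → Ct → (Fin ν → Bool))
    (hMunif : ∀ m, ∑ ω ∈ Finset.univ.filter (fun ω => M ω = m), μ ω =
      ((2 : ℝ) ^ ν)⁻¹)
    (hMK : ∀ m k, ∑ ω ∈ Finset.univ.filter (fun ω => M ω = m ∧ K ω = k), μ ω =
      (∑ ω ∈ Finset.univ.filter (fun ω => M ω = m), μ ω) *
        (∑ ω ∈ Finset.univ.filter (fun ω => K ω = k), μ ω))
    (hMC : ∀ m ct,
      ∑ ω ∈ Finset.univ.filter (fun ω => M ω = m ∧ C ω = ct), μ ω =
        (∑ ω ∈ Finset.univ.filter (fun ω => M ω = m), μ ω) *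
          (∑ ω ∈ Finset.univ.filter (fun ω => C ω = ct), μ ω))
    (hDec : ∀ ω, 0 < μ ω → Dec (K ω) (C ω) = M ω) :
    (∀ ct, ∑ ω ∈ Finset.univ.filter (fun ω => C ω = ct), μ ω ≤
      ((2 : ℝ) ^ ν)⁻¹) ∧
    (∀ (t : ℕ) (δ : ℝ), 0 < δ →
      (∃ ct, (2 : ℝ) ^ (-(δ * t)) ≤
        ∑ ω ∈ Finset.univ.filter (fun ω => C ω = ct), μ ω) →
      (ν : ℝ) ≤ δ * t) := by
  have key : ∀ ct, ∑ ω ∈ Finset.univ.filter (fun ω => C ω = ct), μ ω ≤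
      ((2 : ℝ) ^ ν)⁻¹ := by
    intro ct
    -- decompose by key value
    have hdecomp : ∑ ω ∈ Finset.univ.filter (fun ω => C ω = ct), μ ω =
        ∑ k, ∑ ω ∈ Finset.univ.filter (fun ω => C ω = ct ∧ K ω = k), μ ω := by
      rw [← Finset.sum_fiberwise (Finset.univ.filter (fun ω => C ω = ct)) K μ]
      apply Finset.sum_congr rfl
      intro k _
      congr 1
      ext ω
      simp [Finset.mem_filter, and_comm]
    rw [hdecomp]
    have hbound : ∀ k : Key,
        ∑ ω ∈ Finset.univ.filter (fun ω => C ω = ct ∧ K ω = k), μ ω ≤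
        ((2 : ℝ) ^ ν)⁻¹ *
          (∑ ω ∈ Finset.univ.filter (fun ω => K ω = k), μ ω) := by
      intro k
      have hsub : ∑ ω ∈ Finset.univ.filter (fun ω => C ω = ct ∧ K ω = k), μ ω ≤
          ∑ ω ∈ Finset.univ.filter (fun ω => M ω = Dec k ct ∧ K ω = k), μ ω := by
        apply sum_le_of_pos_subset μ hμ0
        intro ω hω hpos
        simp only [Finset.mem_filter, Finset.mem_univ, true_and] at hω ⊢
        obtain ⟨hc, hk⟩ := hω
        refine ⟨?_, hk⟩
        rw [← hc, ← hk]
        exact (hDec ω hpos).symm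
      calc ∑ ω ∈ Finset.univ.filter (fun ω => C ω = ct ∧ K ω = k), μ ω
          ≤ ∑ ω ∈ Finset.univ.filter (fun ω => M ω = Dec k ct ∧ K ω = k), μ ω :=
            hsub
        _ = ((2 : ℝ) ^ ν)⁻¹ *
            (∑ ω ∈ Finset.univ.filter (fun ω => K ω = k), μ ω) := by
            rw [hMK, hMunif]
    calc ∑ k, ∑ ω ∈ Finset.univ.filter (fun ω => C ω = ct ∧ K ω = k), μ ω
        ≤ ∑ k, ((2 : ℝ) ^ ν)⁻¹ *
            (∑ ω ∈ Finset.univ.filter (fun ω => K ω = k), μ ω) :=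
          Finset.sum_le_sum (fun k _ => hbound k)
      _ = ((2 : ℝ) ^ ν)⁻¹ *
            ∑ k, (∑ ω ∈ Finset.univ.filter (fun ω => K ω = k), μ ω) := by
          rw [Finset.mul_sum]
      _ = ((2 : ℝ) ^ ν)⁻¹ := by
          rw [Finset.sum_fiberwise Finset.univ K μ, hμ1, mul_one]
  refine ⟨key, ?_⟩
  intro t δ hδ ⟨ct, hct⟩
  have h1 : (2 : ℝ) ^ (-(δ * t)) ≤ ((2 : ℝ) ^ ν)⁻¹ := le_trans hct (key ct)
  have h2 : ((2 : ℝ) ^ ν)⁻¹ = (2 : ℝ) ^ (-(ν : ℝ)) := by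
    rw [Real.rpow_neg (by norm_num), Real.rpow_natCast]
  rw [h2] at h1
  have := (Real.rpow_le_rpow_left_iff (x := 2) (by norm_num)).mp h1
  linarith
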